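/- arXiv:1908.04137 — 2 statements merged into one kernel-verified Lean document; each statement's English description precedes it below -/
import Mathlib

section
/- An arithmetic matroid M satisfies the strong gcd property if and only if both M and its dual M* satisfy the gcd property. -/
open scoped Classical

section Arithmat

variable {E : Type*} [Fintype E] [DecidableEq E]

/-- The rank function axioms of a matroid on ground set `E`. -/
def IsRankFn (rk : Finset E → ℕ) : Prop :=
  (∀ X : Finset E, rk X ≤ X.card) ∧
  (∀ X Y : Finset E, rk (X ∪ Y) + rk (X ∩ Y) ≤ rk X + rk Y) ∧
  (∀ (X : Finset E) (e : E), rk X ≤ rk (insert e X) ∧ rk (insert e X) ≤ rk X + 1)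

/-- `B` is a basis of the matroid: `|B| = rk B = rk E`. -/
def IsBasis (rk : Finset E → ℕ) (B : Finset E) : Prop :=
  B.card = rk B ∧ rk B = rk (Finset.univ : Finset E)

/-- `(X, X ⊔ T ⊔ F)` is a molecule: `X`, `T`, `F` are pairwise disjoint and
`rk Z = rk X + |Z ∩ F|` for every `Z` with `X ⊆ Z ⊆ X ∪ T ∪ F`. -/
def IsMolecule (rk : Finset E → ℕ) (X T F : Finset E) : Prop :=
  Disjoint X T ∧ Disjoint X F ∧ Disjoint T F ∧
  ∀ Z : Finset E, X ⊆ Z → Z ⊆ X ∪ T ∪ F → rk Z = rk X + (Z ∩ F).card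

/-- Axiom (A1) of (quasi-)arithmetic matroids. -/
def AxiomA1 (rk m : Finset E → ℕ) : Prop :=
  ∀ (X : Finset E) (e : E),
    (rk (insert e X) = rk X → m (insert e X) ∣ m X) ∧
    (rk (insert e X) ≠ rk X → m X ∣ m (insert e X))

/-- Axiom (A2) of (quasi-)arithmetic matroids. -/
def AxiomA2 (rk m : Finset E → ℕ) : Prop :=
  ∀ X T F : Finset E, IsMolecule rk X T F →
    m X * m (X ∪ T ∪ F) = m (X ∪ T) * m (X ∪ F)

/-- Axiom (P) of arithmetic matroids.  The sign `(-1) ^ (|X ∪ F| - |S|)` is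
expressed as `(-1) ^ (|X ∪ F| + |S|)`, which has the same parity. -/
def AxiomP (rk m : Finset E → ℕ) : Prop :=
  ∀ X T F : Finset E, IsMolecule rk X T F →
    0 ≤ ∑ S ∈ Finset.Icc X (X ∪ T ∪ F), (-1 : ℤ) ^ ((X ∪ F).card + S.card) * (m S : ℤ)

/-- A quasi-arithmetic matroid: a matroid rank function together with a positive
multiplicity function satisfying (A1) and (A2). -/
def IsQuasiArithmeticMatroid (rk m : Finset E → ℕ) : Prop :=
  IsRankFn rk ∧ (∀ X : Finset E, 0 < m X) ∧ AxiomA1 rk m ∧ AxiomA2 rk m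

/-- An arithmetic matroid: a matroid rank function together with a positive
multiplicity function satisfying (A1), (A2) and (P). -/
def IsArithmeticMatroid (rk m : Finset E → ℕ) : Prop :=
  IsRankFn rk ∧ (∀ X : Finset E, 0 < m X) ∧ AxiomA1 rk m ∧ AxiomA2 rk m ∧ AxiomP rk m

/-- The gcd property: `m X = gcd { m I : I ⊆ X, |I| = rk I = rk X }`. -/
def GcdProperty (rk m : Finset E → ℕ) : Prop :=
  ∀ X : Finset E,
    m X = (X.powerset.filter (fun I => I.card = rk I ∧ rk I = rk X)).gcd m

/-- The strong gcd property: `m X = gcd { m B : B basis, |B ∩ X| = rk X }`. -/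
def StrongGcdProperty (rk m : Finset E → ℕ) : Prop :=
  ∀ X : Finset E,
    m X = ((Finset.univ : Finset (Finset E)).filter
      (fun B => IsBasis rk B ∧ (B ∩ X).card = rk X)).gcd m

/-- The rank function of the dual matroid: `rk* X = |X| - rk E + rk (E \ X)`. -/
def dualRk (rk : Finset E → ℕ) : Finset E → ℕ :=
  fun X => X.card + rk Xᶜ - rk (Finset.univ : Finset E)

/-- The multiplicity function of the dual arithmetic matroid: `m* X = m (E \ X)`. -/
def dualM (m : Finset E → ℕ) : Finset E → ℕ := fun X => m Xᶜ

/-- The set of bases of the matroid, as a `Finset`. -/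
noncomputable def basesFinset (rk : Finset E → ℕ) : Finset (Finset E) :=
  (Finset.univ : Finset (Finset E)).filter (IsBasis rk)

/-- The multiplicity function of the reduction:
`m̄ X = gcd { m B : B basis, rk X = |X ∩ B| } / gcd { m B : B basis }`. -/
noncomputable def reducedM (rk m : Finset E → ℕ) : Finset E → ℕ := fun X =>
  ((basesFinset rk).filter (fun B => (X ∩ B).card = rk X)).gcd m /
    (basesFinset rk).gcd m

/-- `B_(X,Y)`: the set of pairs `(B₁, B₂)` of bases with `rk X = |X ∩ B₁|` and
`rk Y = |Y ∩ B₂|`. -/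
def BasisPairs (rk : Finset E → ℕ) (X Y : Finset E) : Set (Finset E × Finset E) :=
  {p | IsBasis rk p.1 ∧ IsBasis rk p.2 ∧ rk X = (X ∩ p.1).card ∧ rk Y = (Y ∩ p.2).card}

end Arithmat

section StrongGcdHelpers

variable {E : Type*} [Fintype E] [DecidableEq E] {rk m : Finset E → ℕ}

private lemma sgh_sdiff_erase {X Y : Finset E} (e : E) :
    Y.erase e \ X = (Y \ X).erase e := by
  ext x; simp only [Finset.mem_erase, Finset.mem_sdiff]; tauto

private lemma rk_mono (h : IsRankFn rk) {X Y : Finset E} (hXY : X ⊆ Y) : rk X ≤ rk Y := by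
  obtain ⟨h1, h2, h3⟩ := h
  have key : ∀ n (Y : Finset E), X ⊆ Y → (Y \ X).card = n → rk X ≤ rk Y := by
    intro n
    induction n with
    | zero =>
      intro Y hXY hc
      have hYX : Y ⊆ X := Finset.sdiff_eq_empty_iff_subset.mp (Finset.card_eq_zero.mp hc)
      rw [Finset.Subset.antisymm hXY hYX]
    | succ n ih =>
      intro Y hXY hc
      obtain ⟨e, he⟩ : (Y \ X).Nonempty := by rw [← Finset.card_pos, hc]; omega
      have heY : e ∈ Y := (Finset.mem_sdiff.mp he).1
      have heX : e ∉ X := (Finset.mem_sdiff.mp he).2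
      have hsub : X ⊆ Y.erase e := Finset.subset_erase.mpr ⟨hXY, heX⟩
      have hcard : (Y.erase e \ X).card = n := by
        rw [sgh_sdiff_erase, Finset.card_erase_of_mem he, hc]; omega
      have h4 := (h3 (Y.erase e) e).1
      rw [Finset.insert_erase heY] at h4
      exact le_trans (ih (Y.erase e) hsub hcard) h4
  exact key _ Y hXY rfl

private lemma rk_le_add (h : IsRankFn rk) {X Y : Finset E} (hXY : X ⊆ Y) :
    rk Y ≤ rk X + (Y \ X).card := by
  obtain ⟨h1, h2, h3⟩ := h
  have key : ∀ n (Y : Finset E), X ⊆ Y → (Y \ X).card = n → rk Y ≤ rk X + n := by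
    intro n
    induction n with
    | zero =>
      intro Y hXY hc
      have hYX : Y ⊆ X := Finset.sdiff_eq_empty_iff_subset.mp (Finset.card_eq_zero.mp hc)
      rw [Finset.Subset.antisymm hXY hYX]; omega
    | succ n ih =>
      intro Y hXY hc
      obtain ⟨e, he⟩ : (Y \ X).Nonempty := by rw [← Finset.card_pos, hc]; omega
      have heY : e ∈ Y := (Finset.mem_sdiff.mp he).1
      have heX : e ∉ X := (Finset.mem_sdiff.mp he).2
      have hsub : X ⊆ Y.erase e := Finset.subset_erase.mpr ⟨hXY, heX⟩
      have hcard : (Y.erase e \ X).card = n := by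
        rw [sgh_sdiff_erase, Finset.card_erase_of_mem he, hc]; omega
      have h4 := (h3 (Y.erase e) e).2
      rw [Finset.insert_erase heY] at h4
      have := ih (Y.erase e) hsub hcard
      omega
  exact key _ Y hXY rfl

/-- A subset of an independent set is independent. -/
private lemma indep_subset (h : IsRankFn rk) {I J : Finset E} (hIJ : I ⊆ J)
    (hJ : J.card = rk J) : I.card = rk I := by
  have h1 := h.1 I
  have h2 := rk_le_add h hIJ
  have h3 : (J \ I).card = J.card - I.card := Finset.card_sdiff_of_subset hIJ
  have h4 : I.card ≤ J.card := Finset.card_le_card hIJ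
  omega

private lemma rk_compl_ge (h : IsRankFn rk) (J : Finset E) :
    rk (Finset.univ : Finset E) ≤ J.card + rk Jᶜ := by
  have h2 := h.2.1 J Jᶜ
  have h1 := h.1 J
  rw [Finset.union_compl] at h2
  omega

/-- If `X ⊆ Y` have equal rank then `m Y ∣ m X` (by (A1)). -/
private lemma m_dvd_of_rk_eq (h : IsRankFn rk) (hA1 : AxiomA1 rk m) {X Y : Finset E}
    (hXY : X ⊆ Y) (hr : rk X = rk Y) : m Y ∣ m X := by
  have key : ∀ n (Y : Finset E), X ⊆ Y → rk X = rk Y → (Y \ X).card = n → m Y ∣ m X := by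
    intro n
    induction n with
    | zero =>
      intro Y hXY hr hc
      have hYX : Y ⊆ X := Finset.sdiff_eq_empty_iff_subset.mp (Finset.card_eq_zero.mp hc)
      rw [Finset.Subset.antisymm hXY hYX]
    | succ n ih =>
      intro Y hXY hr hc
      obtain ⟨e, he⟩ : (Y \ X).Nonempty := by rw [← Finset.card_pos, hc]; omega
      have heY : e ∈ Y := (Finset.mem_sdiff.mp he).1
      have heX : e ∉ X := (Finset.mem_sdiff.mp he).2
      have hsub : X ⊆ Y.erase e := Finset.subset_erase.mpr ⟨hXY, heX⟩
      have hcard : (Y.erase e \ X).card = n := by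
        rw [sgh_sdiff_erase, Finset.card_erase_of_mem he, hc]; omega
      have hr1 : rk X ≤ rk (Y.erase e) := rk_mono h hsub
      have hr2 : rk (Y.erase e) ≤ rk Y := rk_mono h (Finset.erase_subset _ _)
      have hre : rk (Y.erase e) = rk X := by omega
      have hA := (hA1 (Y.erase e) e).1
      rw [Finset.insert_erase heY] at hA
      exact dvd_trans (hA (by omega)) (ih (Y.erase e) hsub (hre.symm) hcard)
  exact key _ Y hXY hr rfl

/-- For nested independent sets `I ⊆ J`, `m I ∣ m J` (by (A1)). -/
private lemma m_dvd_of_indep (h : IsRankFn rk) (hA1 : AxiomA1 rk m) {I J : Finset E}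
    (hIJ : I ⊆ J) (hI : I.card = rk I) (hJ : J.card = rk J) : m I ∣ m J := by
  have key : ∀ n (I : Finset E), I ⊆ J → I.card = rk I → (J \ I).card = n → m I ∣ m J := by
    intro n
    induction n with
    | zero =>
      intro I hIJ hI hc
      have hJI : J ⊆ I := Finset.sdiff_eq_empty_iff_subset.mp (Finset.card_eq_zero.mp hc)
      rw [Finset.Subset.antisymm hIJ hJI]
    | succ n ih =>
      intro I hIJ hI hc
      obtain ⟨e, he⟩ : (J \ I).Nonempty := by rw [← Finset.card_pos, hc]; omega
      have heJ : e ∈ J := (Finset.mem_sdiff.mp he).1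
      have heI : e ∉ I := (Finset.mem_sdiff.mp he).2
      have hsub : insert e I ⊆ J := Finset.insert_subset heJ hIJ
      have hInd : (insert e I).card = rk (insert e I) := indep_subset h hsub hJ
      have hcardI : (insert e I).card = I.card + 1 := Finset.card_insert_of_notMem heI
      have hA := (hA1 I e).2 (by omega)
      have hcard : (J \ insert e I).card = n := by
        have : J \ insert e I = (J \ I).erase e := by
          ext x; simp only [Finset.mem_erase, Finset.mem_sdiff, Finset.mem_insert]; tauto
        rw [this, Finset.card_erase_of_mem he, hc]; omega
      exact dvd_trans hA (ih (insert e I) hsub hInd hcard)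
  exact key _ I hIJ hI rfl

/-- Translation of the dual independence/rank conditions. -/
private lemma dual_cond (h : IsRankFn rk) (J A : Finset E) :
    (J.card = dualRk rk J ∧ dualRk rk J = dualRk rk A) ↔
    (rk Jᶜ = rk (Finset.univ : Finset E) ∧
      Jᶜ.card + rk Aᶜ = Aᶜ.card + rk (Finset.univ : Finset E)) := by
  have h1 := rk_compl_ge h J
  have h2 := rk_compl_ge h A
  have h3 : rk Jᶜ ≤ rk (Finset.univ : Finset E) := rk_mono h (Finset.subset_univ _)
  have h4 : rk Aᶜ ≤ rk (Finset.univ : Finset E) := rk_mono h (Finset.subset_univ _)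
  have h5 := Finset.card_add_card_compl J
  have h6 := Finset.card_add_card_compl A
  unfold dualRk
  omega

end StrongGcdHelpers


/-- An arithmetic matroid `M` satisfies the strong gcd property if
and only if both `M` and its dual `M*` satisfy the gcd property. -/
theorem strongGcd_iff_gcd_and_dual_gcd {E : Type*} [Fintype E] [DecidableEq E]
    (rk m : Finset E → ℕ) (hM : IsArithmeticMatroid rk m) :
    StrongGcdProperty rk m ↔
      GcdProperty rk m ∧ GcdProperty (dualRk rk) (dualM m) := by
  obtain ⟨hrk, hpos, hA1, hA2, hP⟩ := hM
  have hrkU : ∀ X : Finset E, rk X ≤ rk (Finset.univ : Finset E) :=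
    fun X => rk_mono hrk (Finset.subset_univ X)
  constructor
  · intro hS
    constructor
    · -- gcd property for M
      intro X
      apply Nat.dvd_antisymm
      · apply Finset.dvd_gcd
        intro I hI
        rw [Finset.mem_filter, Finset.mem_powerset] at hI
        exact m_dvd_of_rk_eq hrk hA1 hI.1 hI.2.2
      · rw [hS X]
        apply Finset.dvd_gcd
        intro B hB
        rw [Finset.mem_filter] at hB
        obtain ⟨-, hBb, hBX⟩ := hB
        have hind : (B ∩ X).card = rk (B ∩ X) :=
          indep_subset hrk Finset.inter_subset_left hBb.1
        have hmem : B ∩ X ∈ X.powerset.filter (fun I => I.card = rk I ∧ rk I = rk X) := by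
          rw [Finset.mem_filter, Finset.mem_powerset]
          exact ⟨Finset.inter_subset_right, hind, by omega⟩
        exact dvd_trans (Finset.gcd_dvd hmem)
          (m_dvd_of_indep hrk hA1 Finset.inter_subset_left hind hBb.1)
    · -- gcd property for the dual
      intro A
      apply Nat.dvd_antisymm
      · apply Finset.dvd_gcd
        intro J hJ
        rw [Finset.mem_filter, Finset.mem_powerset] at hJ
        obtain ⟨hJA, hJc⟩ := hJ
        obtain ⟨hY1, hY2⟩ := (dual_cond hrk J A).mp hJc
        show m Aᶜ ∣ m Jᶜ
        rw [hS Jᶜ]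
        apply Finset.dvd_gcd
        intro B hB
        rw [Finset.mem_filter] at hB
        obtain ⟨-, hBb, hBY⟩ := hB
        -- B ⊆ Jᶜ
        have hBcard : (B ∩ Jᶜ).card = B.card := by
          rw [hBY, hY1, ← hBb.2, ← hBb.1]
        have hBsub : B ⊆ Jᶜ := by
          have heq : B ∩ Jᶜ = B := Finset.eq_of_subset_of_card_le
            Finset.inter_subset_left (le_of_eq hBcard.symm)
          rw [← heq]
          exact Finset.inter_subset_right
        -- Aᶜ ⊆ Jᶜ
        have hWY : Aᶜ ⊆ Jᶜ := by
          intro x hx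
          rw [Finset.mem_compl] at hx ⊢
          exact fun hxJ => hx (hJA hxJ)
        -- card count: |B ∩ Aᶜ| = rk Aᶜ
        have e1 : (B ∩ Aᶜ).card + (B \ Aᶜ).card = B.card := Finset.card_inter_add_card_sdiff B Aᶜ
        have e2 : (B \ Aᶜ).card ≤ (Jᶜ \ Aᶜ).card :=
          Finset.card_le_card (Finset.sdiff_subset_sdiff hBsub (le_refl _))
        have e3 : (Jᶜ \ Aᶜ).card = Jᶜ.card - Aᶜ.card := Finset.card_sdiff_of_subset hWY
        have e4 : Aᶜ.card ≤ Jᶜ.card := Finset.card_le_card hWY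
        have e5 : (B ∩ Aᶜ).card = rk (B ∩ Aᶜ) := indep_subset hrk Finset.inter_subset_left hBb.1
        have e6 : rk (B ∩ Aᶜ) ≤ rk Aᶜ := rk_mono hrk Finset.inter_subset_right
        have e7 : rk Aᶜ ≤ rk (Finset.univ : Finset E) := hrkU _
        have hBA : (B ∩ Aᶜ).card = rk Aᶜ := by
          have hBcardU : B.card = rk (Finset.univ : Finset E) := by rw [hBb.1, hBb.2]
          omega
        rw [hS Aᶜ]
        exact Finset.gcd_dvd (by
          rw [Finset.mem_filter]
          exact ⟨Finset.mem_univ _, hBb, hBA⟩)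
      · show _ ∣ m Aᶜ
        rw [hS Aᶜ]
        apply Finset.dvd_gcd
        intro B hB
        rw [Finset.mem_filter] at hB
        obtain ⟨-, hBb, hBA⟩ := hB
        set Y : Finset E := Aᶜ ∪ B with hYdef
        have hBY : B ⊆ Y := Finset.subset_union_right
        have hAY : Aᶜ ⊆ Y := Finset.subset_union_left
        have hrkY : rk Y = rk (Finset.univ : Finset E) :=
          le_antisymm (hrkU _) (by rw [← hBb.2]; exact rk_mono hrk hBY)
        have hmem : Yᶜ ∈ A.powerset.filter
            (fun I => I.card = dualRk rk I ∧ dualRk rk I = dualRk rk A) := by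
          rw [Finset.mem_filter, Finset.mem_powerset]
          constructor
          · intro x hx
            rw [Finset.mem_compl] at hx
            by_contra hxA
            exact hx (hAY (Finset.mem_compl.mpr hxA))
          · rw [dual_cond hrk Yᶜ A, compl_compl]
            have e1 : (B \ Aᶜ).card + Aᶜ.card = (B ∪ Aᶜ).card := Finset.card_sdiff_add_card B Aᶜ
            have e2 : (B ∩ Aᶜ).card + (B \ Aᶜ).card = B.card :=
              Finset.card_inter_add_card_sdiff B Aᶜ
            have e3 : (B ∪ Aᶜ) = Y := Finset.union_comm _ _
            have hBcardU : B.card = rk (Finset.univ : Finset E) := by rw [hBb.1, hBb.2]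
            have e7 : rk Aᶜ ≤ rk (Finset.univ : Finset E) := hrkU _
            refine ⟨hrkY, ?_⟩
            rw [e3] at e1
            omega
        refine dvd_trans (Finset.gcd_dvd hmem) ?_
        show m Yᶜᶜ ∣ m B
        rw [compl_compl]
        exact m_dvd_of_rk_eq hrk hA1 hBY (by rw [hrkY, ← hBb.2, ← hBb.1])
  · rintro ⟨hg, hgd⟩ X
    apply Nat.dvd_antisymm
    · apply Finset.dvd_gcd
      intro B hB
      rw [Finset.mem_filter] at hB
      obtain ⟨-, hBb, hBX⟩ := hB
      have hind : (B ∩ X).card = rk (B ∩ X) :=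
        indep_subset hrk Finset.inter_subset_left hBb.1
      exact dvd_trans
        (m_dvd_of_rk_eq hrk hA1 Finset.inter_subset_right (by omega))
        (m_dvd_of_indep hrk hA1 Finset.inter_subset_left hind hBb.1)
    · rw [hg X]
      apply Finset.dvd_gcd
      intro I hI
      rw [Finset.mem_filter, Finset.mem_powerset] at hI
      obtain ⟨hIX, hIind, hIrk⟩ := hI
      -- pass to the dual at Iᶜ
      have hdual := hgd Iᶜ
      have hmI : m I = dualM m Iᶜ := by rw [dualM, compl_compl]
      rw [hmI, hdual]
      apply Finset.dvd_gcd
      intro J hJ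
      rw [Finset.mem_filter, Finset.mem_powerset] at hJ
      obtain ⟨hJI, hJc⟩ := hJ
      obtain ⟨hY1, hY2⟩ := (dual_cond hrk J Iᶜ).mp hJc
      rw [compl_compl] at hY2
      show _ ∣ m Jᶜ
      have hIY : I ⊆ Jᶜ := by
        intro x hx
        rw [Finset.mem_compl]
        exact fun hxJ => Finset.mem_compl.mp (hJI hxJ) hx
      rw [hg Jᶜ]
      apply Finset.dvd_gcd
      intro J' hJ'
      rw [Finset.mem_filter, Finset.mem_powerset] at hJ'
      obtain ⟨hJ'Y, hJ'ind, hJ'rk⟩ := hJ'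
      have hJ'basis : IsBasis rk J' := ⟨hJ'ind, by rw [hJ'rk, hY1]⟩
      -- I ⊆ J'
      have e1 : (J' ∩ I).card + (J' \ I).card = J'.card := Finset.card_inter_add_card_sdiff J' I
      have e2 : (J' \ I).card ≤ (Jᶜ \ I).card :=
        Finset.card_le_card (Finset.sdiff_subset_sdiff hJ'Y (le_refl _))
      have e3 : (Jᶜ \ I).card = Jᶜ.card - I.card := Finset.card_sdiff_of_subset hIY
      have e4 : I.card ≤ Jᶜ.card := Finset.card_le_card hIY
      have e5 : rk I ≤ rk (Finset.univ : Finset E) := hrkU _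
      have hJ'card : J'.card = rk (Finset.univ : Finset E) := by rw [hJ'ind, hJ'rk, hY1]
      have hIJ'card : I.card ≤ (J' ∩ I).card := by omega
      have hIJ' : I ⊆ J' := by
        have heq : J' ∩ I = I := Finset.eq_of_subset_of_card_le
          Finset.inter_subset_right hIJ'card
        rw [← heq]
        exact Finset.inter_subset_left
      -- |J' ∩ X| = rk X
      have f1 : (J' ∩ X).card = rk (J' ∩ X) :=
        indep_subset hrk Finset.inter_subset_left hJ'basis.1
      have f2 : rk (J' ∩ X) ≤ rk X := rk_mono hrk Finset.inter_subset_right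
      have f3 : I ⊆ J' ∩ X := Finset.subset_inter hIJ' hIX
      have f4 : I.card ≤ (J' ∩ X).card := Finset.card_le_card f3
      have hJ'X : (J' ∩ X).card = rk X := by omega
      exact Finset.gcd_dvd (by
        rw [Finset.mem_filter]
        exact ⟨Finset.mem_univ _, hJ'basis, hJ'X⟩)
end

section
/- Let (E, rk) be a matroid, let (X,Y) be a molecule with decomposition Y = X ⊔ T ⊔ F, and let (B₁, B₂) ∈ B_{(X,Y)}. Then B₃ = (B₁ ∖ X) ∪ (B₂ ∩ (X ∪ T)) is a basis and |B₃ ∩ (X ∪ T)| = rk(X ∪ T). -/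
open scoped Classical

private lemma rk_union_bounds {E : Type*} [DecidableEq E] {rk : Finset E → ℕ}
    (hrk : IsRankFn rk) (A S : Finset E) :
    rk A ≤ rk (A ∪ S) ∧ rk (A ∪ S) ≤ rk A + S.card := by
  classical
  induction S using Finset.induction_on with
  | empty => simp
  | @insert e S he ih =>
    obtain ⟨ih1, ih2⟩ := ih
    have h1 : A ∪ insert e S = insert e (A ∪ S) := Finset.union_insert _ _ _
    obtain ⟨h21, h22⟩ := hrk.2.2 (A ∪ S) e
    rw [h1, Finset.card_insert_of_notMem he]
    omega

private lemma rk_mono_s6 {E : Type*} [DecidableEq E] {rk : Finset E → ℕ}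
    (hrk : IsRankFn rk) {A B : Finset E} (h : A ⊆ B) : rk A ≤ rk B := by
  have := (rk_union_bounds hrk A (B \ A)).1
  rwa [Finset.union_sdiff_of_subset h] at this

private lemma rk_indep_subset {E : Type*} [DecidableEq E] {rk : Finset E → ℕ}
    (hrk : IsRankFn rk) {B S : Finset E} (hB : B.card = rk B) (h : S ⊆ B) :
    rk S = S.card := by
  have h1 := (rk_union_bounds hrk S (B \ S)).2
  rw [Finset.union_sdiff_of_subset h] at h1
  have h2 : S.card + (B \ S).card = B.card := by
    rw [Finset.card_sdiff_of_subset h]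
    have := Finset.card_le_card h
    omega
  have h3 := hrk.1 S
  omega

/-- Let `(E, rk)` be a matroid, `(X, Y)` a molecule with
decomposition `Y = X ⊔ T ⊔ F`, and `(B₁, B₂) ∈ B_(X,Y)`.  Then
`B₃ = (B₁ \ X) ∪ (B₂ ∩ (X ∪ T))` is a basis and `|B₃ ∩ (X ∪ T)| = rk (X ∪ T)`. -/
theorem molecule_basisPairs_B3_isBasis
    {E : Type*} [Fintype E] [DecidableEq E]
    (rk : Finset E → ℕ) (hrk : IsRankFn rk)
    (X T F : Finset E) (hmol : IsMolecule rk X T F)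
    (B₁ B₂ : Finset E) (hB : (B₁, B₂) ∈ BasisPairs rk X (X ∪ T ∪ F)) :
    IsBasis rk ((B₁ \ X) ∪ (B₂ ∩ (X ∪ T))) ∧
    (((B₁ \ X) ∪ (B₂ ∩ (X ∪ T))) ∩ (X ∪ T)).card = rk (X ∪ T) := by
  classical
  obtain ⟨hrk1, hrk2, hrk3⟩ := hrk
  obtain ⟨hXT, hXF, hTF, hZ⟩ := hmol
  obtain ⟨hB1, hB2, hrX, hrY⟩ := hB
  have hrX : rk X = (X ∩ B₁).card := hrX
  have hrY : rk (X ∪ T ∪ F) = ((X ∪ T ∪ F) ∩ B₂).card := hrY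
  set Y := X ∪ T ∪ F with hY
  have hFY : F ⊆ Y := by intro x hx; simp [hY]; tauto
  have hXTY : X ∪ T ⊆ Y := by intro x hx; simp [hY] at hx ⊢; tauto
  have hXY : X ⊆ Y := by intro x hx; simp [hY]; tauto
  -- rk Y = rk X + |F|
  have rkY : rk Y = rk X + F.card := by
    have := hZ Y hXY le_rfl
    rwa [Finset.inter_eq_right.2 hFY] at this
  -- rk (X ∪ T) = rk X
  have hXTF : (X ∪ T) ∩ F = ∅ := by
    rw [Finset.union_inter_distrib_right,
      Finset.disjoint_iff_inter_eq_empty.1 hXF,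
      Finset.disjoint_iff_inter_eq_empty.1 hTF, Finset.union_empty]
  have rkXT : rk (X ∪ T) = rk X := by
    have := hZ (X ∪ T) Finset.subset_union_left (by intro x hx; simp [hY] at hx ⊢; tauto)
    rw [hXTF] at this; simpa using this
  have hB1c : B₁.card = rk Finset.univ := by rw [hB1.1, hB1.2]
  have hB2c : B₂.card = rk Finset.univ := by rw [hB2.1, hB2.2]
  -- F ⊆ B₂
  have hDsub : Y ∩ B₂ ⊆ B₂ := Finset.inter_subset_right
  have rkD : rk (Y ∩ B₂) = (Y ∩ B₂).card := rk_indep_subset ⟨hrk1, hrk2, hrk3⟩ hB2.1 hDsub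
  have hFB2 : F ⊆ B₂ := by
    have hsub1 : X ⊆ X ∪ (Y ∩ B₂) := Finset.subset_union_left
    have hsub2 : X ∪ (Y ∩ B₂) ⊆ Y := by
      intro x hx; simp at hx
      rcases hx with h | h
      · exact hXY h
      · exact h.1
    have hZeq := hZ (X ∪ (Y ∩ B₂)) hsub1 hsub2
    have hint : (X ∪ (Y ∩ B₂)) ∩ F = F ∩ B₂ := by
      rw [Finset.union_inter_distrib_right,
        Finset.disjoint_iff_inter_eq_empty.1 hXF, Finset.empty_union]
      ext x
      simp only [Finset.mem_inter]
      constructor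
      · tauto
      · intro hx; exact ⟨⟨hFY hx.1, hx.2⟩, hx.1⟩
    rw [hint] at hZeq
    have hge : rk (X ∪ (Y ∩ B₂)) ≥ rk (Y ∩ B₂) :=
      rk_mono_s6 ⟨hrk1, hrk2, hrk3⟩ Finset.subset_union_right
    rw [rkD, ← hrY, rkY] at hge
    have hcardle : (F ∩ B₂).card ≤ F.card := Finset.card_le_card Finset.inter_subset_left
    have hFcard : F.card ≤ (F ∩ B₂).card := by omega
    exact Finset.inter_eq_left.1
      (Finset.eq_of_subset_of_card_le Finset.inter_subset_left hFcard)
  set A := B₁ \ X with hA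
  set C := B₂ ∩ (X ∪ T) with hC
  -- |A| + rk X = rk univ
  have cardA : A.card + rk X = rk Finset.univ := by
    have h1 : A.card + (B₁ ∩ X).card = B₁.card := by
      rw [hA, Finset.card_sdiff_add_card_inter]
    have h2 : X ∩ B₁ = B₁ ∩ X := Finset.inter_comm _ _
    rw [h2] at hrX
    omega
  -- |C| = rk X
  have cardC : C.card = rk X := by
    have hsplit : Y ∩ B₂ = C ∪ (B₂ ∩ F) := by
      rw [hY, hC]
      ext x; simp; tauto
    have hdisj : Disjoint C (B₂ ∩ F) := by
      rw [hC]
      apply Finset.disjoint_left.2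
      intro x hx hx2
      simp only [Finset.mem_inter] at hx hx2
      have : x ∈ (X ∪ T) ∩ F := Finset.mem_inter.2 ⟨hx.2, hx2.2⟩
      rw [hXTF] at this; simp at this
    have hcardsplit : (Y ∩ B₂).card = C.card + (B₂ ∩ F).card := by
      rw [hsplit, Finset.card_union_of_disjoint hdisj]
    have hBF : B₂ ∩ F = F := by
      rw [Finset.inter_comm]; exact Finset.inter_eq_left.2 hFB2
    rw [hBF, ← hrY, rkY] at hcardsplit
    omega
  have rkC : rk C = rk X := by
    rw [rk_indep_subset ⟨hrk1, hrk2, hrk3⟩ hB2.1 Finset.inter_subset_left, cardC]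
  -- rk (X ∪ C) = rk X
  have rkXC : rk (X ∪ C) = rk X := by
    have hsub2 : X ∪ C ⊆ Y := by
      intro x hx; simp only [Finset.mem_union] at hx
      rcases hx with h | h
      · exact hXY h
      · exact hXTY (Finset.mem_of_mem_inter_right h)
    have hZeq := hZ (X ∪ C) Finset.subset_union_left hsub2
    have hint : (X ∪ C) ∩ F = ∅ := by
      rw [Finset.union_inter_distrib_right,
        Finset.disjoint_iff_inter_eq_empty.1 hXF, Finset.empty_union]
      rw [hC]
      apply Finset.eq_empty_of_forall_notMem
      intro x hx
      simp only [Finset.mem_inter] at hx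
      have : x ∈ (X ∪ T) ∩ F := Finset.mem_inter.2 ⟨hx.1.2, hx.2⟩
      rw [hXTF] at this; simp at this
    rw [hint] at hZeq; simpa using hZeq
  -- submodularity step
  have hinter : (A ∪ C) ∩ (X ∪ C) = C := by
    rw [hA]; ext x; simp; tauto
  have hunionB1 : B₁ ⊆ (A ∪ C) ∪ (X ∪ C) := by
    intro x hx
    rw [hA]
    simp only [Finset.mem_union, Finset.mem_sdiff]
    by_cases h : x ∈ X
    · tauto
    · tauto
  have hsubmod := hrk2 (A ∪ C) (X ∪ C)
  rw [hinter, rkC, rkXC] at hsubmod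
  have hge1 : rk Finset.univ ≤ rk ((A ∪ C) ∪ (X ∪ C)) := by
    calc rk Finset.univ = rk B₁ := hB1.2.symm
    _ ≤ _ := rk_mono_s6 ⟨hrk1, hrk2, hrk3⟩ hunionB1
  have hgeAC : rk Finset.univ ≤ rk (A ∪ C) := by omega
  have hcardB3 : (A ∪ C).card ≤ rk Finset.univ := by
    have := Finset.card_union_le A C
    omega
  have hrkle : rk (A ∪ C) ≤ (A ∪ C).card := hrk1 _
  have hbasis : IsBasis rk (A ∪ C) := ⟨by omega, by omega⟩
  refine ⟨hbasis, ?_⟩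
  -- second part
  have hCsub : C ⊆ (A ∪ C) ∩ (X ∪ T) :=
    Finset.subset_inter Finset.subset_union_right Finset.inter_subset_right
  have hScard : ((A ∪ C) ∩ (X ∪ T)).card = rk ((A ∪ C) ∩ (X ∪ T)) :=
    (rk_indep_subset ⟨hrk1, hrk2, hrk3⟩ hbasis.1 Finset.inter_subset_left).symm
  have hSle : rk ((A ∪ C) ∩ (X ∪ T)) ≤ rk (X ∪ T) :=
    rk_mono_s6 ⟨hrk1, hrk2, hrk3⟩ Finset.inter_subset_right
  have hSge : rk X ≤ ((A ∪ C) ∩ (X ∪ T)).card := by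
    rw [← cardC]; exact Finset.card_le_card hCsub
  omega
end
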